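/- For every k ≥ 1, 1/2 + (k/√(4k²-1))·coth((k/2)·√((2k+1)/(2k-1))) > 1, and this quantity tends to 1 as k → ∞. -/

import Mathlib

/-- `c(k) = 1/2 + (k/√(4k²-1))·coth((k/2)·√((2k+1)/(2k-1)))`. -/
noncomputable def propBound' (k : ℕ) : ℝ :=
  1 / 2 + (k : ℝ) / Real.sqrt (4 * (k : ℝ) ^ 2 - 1) *
    (Real.cosh ((k : ℝ) / 2 * Real.sqrt ((2 * (k : ℝ) + 1) / (2 * (k : ℝ) - 1))) /
     Real.sinh ((k : ℝ) / 2 * Real.sqrt ((2 * (k : ℝ) + 1) / (2 * (k : ℝ) - 1))))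

/-!
Both factors of the product in `c(k)` exceed their limits: `k/√(4k²-1) > k/√(4k²) = 1/2`, and
`coth x > 1` for `x > 0`. As `k → ∞` the first factor tends to `1/2`, while the argument of `coth`
is at least `k/2`, so `coth` of it tends to `1`; hence `c(k) → 1/2 + 1/2 · 1 = 1`.
-/

open Real Filter Topology

namespace Real

lemma one_lt_cosh_div_sinh {x : ℝ} (hx : 0 < x) : 1 < cosh x / sinh x :=
  (one_lt_div (sinh_pos_iff.2 hx)).2 (sinh_lt_cosh x)

lemma tendsto_sinh_atTop : Tendsto sinh atTop atTop :=
  tendsto_atTop_mono' _ ((eventually_ge_atTop 0).mono fun _ hx => self_le_sinh_iff.2 hx) tendsto_id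

lemma cosh_div_sinh_eq_one_add {x : ℝ} (hx : sinh x ≠ 0) :
    cosh x / sinh x = 1 + exp (-x) / sinh x := by
  rw [← cosh_sub_sinh]
  field_simp
  ring

lemma tendsto_cosh_div_sinh_atTop : Tendsto (fun x => cosh x / sinh x) atTop (𝓝 1) := by
  have h := (tendsto_exp_neg_atTop_nhds_zero.div_atTop tendsto_sinh_atTop).const_add 1
  rw [add_zero] at h
  refine h.congr' ?_
  filter_upwards [eventually_gt_atTop 0] with x hx
  exact (cosh_div_sinh_eq_one_add (sinh_pos_iff.2 hx).ne').symm

end Real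

lemma half_lt_div_sqrt_four_mul_sq_sub_one {x : ℝ} (hx : 1 / 2 < x) :
    1 / 2 < x / √(4 * x ^ 2 - 1) := by
  have hpos : 0 < √(4 * x ^ 2 - 1) := sqrt_pos.2 (by nlinarith)
  have hlt : √(4 * x ^ 2 - 1) < 2 * x := by
    rw [sqrt_lt' (by linarith)]
    linarith
  rw [lt_div_iff₀ hpos]
  linarith

lemma tendsto_div_sqrt_four_mul_sq_sub_one :
    Tendsto (fun x : ℝ => x / √(4 * x ^ 2 - 1)) atTop (𝓝 (1 / 2)) := by
  have hlim : Tendsto (fun x : ℝ => (√(4 - (x ^ 2)⁻¹))⁻¹) atTop (𝓝 (√(4 - 0))⁻¹) :=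
    (((tendsto_pow_atTop two_ne_zero).inv_tendsto_atTop.const_sub 4).sqrt).inv₀ (by norm_num)
  have hsqrt : √(4 - 0 : ℝ) = 2 := by
    rw [sub_zero, show (4 : ℝ) = 2 ^ 2 by norm_num, sqrt_sq zero_le_two]
  rw [hsqrt, ← one_div] at hlim
  refine hlim.congr' ?_
  filter_upwards [eventually_gt_atTop 0] with x hx
  rw [show 4 * x ^ 2 - 1 = x ^ 2 * (4 - (x ^ 2)⁻¹) by field_simp, sqrt_mul (by positivity),
    sqrt_sq hx.le, div_mul_eq_div_div, div_self hx.ne', one_div]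

lemma half_le_mul_sqrt_div {x : ℝ} (hx : 1 / 2 < x) :
    x / 2 ≤ x / 2 * √((2 * x + 1) / (2 * x - 1)) := by
  have hone : 1 ≤ √((2 * x + 1) / (2 * x - 1)) :=
    one_le_sqrt.2 ((one_le_div (by linarith)).2 (by linarith))
  nlinarith

lemma tendsto_mul_sqrt_div_atTop :
    Tendsto (fun x : ℝ => x / 2 * √((2 * x + 1) / (2 * x - 1))) atTop atTop :=
  tendsto_atTop_mono' _ ((eventually_gt_atTop (1 / 2)).mono fun _ hx => half_le_mul_sqrt_div hx)
    (tendsto_id.atTop_div_const two_pos)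

/-- For every `k ≥ 1` the quantity `c(k)` exceeds `1`, and `c(k) → 1` as `k → ∞`. -/
theorem stmt_8 :
    (∀ k : ℕ, 1 ≤ k → 1 < propBound' k) ∧
      Filter.Tendsto propBound' Filter.atTop (nhds 1) := by
  constructor
  · intro k hk
    have hk : (1 / 2 : ℝ) < k := by
      have : (1 : ℝ) ≤ k := by exact_mod_cast hk
      linarith
    have harg := (half_le_mul_sqrt_div hk).trans_lt' (by linarith : (0 : ℝ) < k / 2)
    have hprod := mul_lt_mul'' (half_lt_div_sqrt_four_mul_sq_sub_one hk)
      (one_lt_cosh_div_sinh harg) (by norm_num) zero_le_one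
    unfold propBound'
    linarith
  · have h := ((tendsto_div_sqrt_four_mul_sq_sub_one.mul
      (tendsto_cosh_div_sinh_atTop.comp tendsto_mul_sqrt_div_atTop)).comp
        tendsto_natCast_atTop_atTop).const_add (1 / 2)
    norm_num at h
    exact h
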